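/- arXiv:2305.12128 — 10 statements merged into one kernel-verified Lean document; each statement's English description precedes it below -/
import Mathlib

section
/- If X is a midconvex subset of an abelian group G (i.e., for all x,y ∈ X, every z ∈ G with 2z = x + y belongs to X), then for every x, y ∈ X, the set Z = {n ∈ ℤ : x + n•(y - x) ∈ X} is order-convex in ℤ (i.e., if k, m ∈ Z and k ≤ n ≤ m, then n ∈ Z). -/
/-- A subset `X` of an additive group is midconvex if whenever `2z = x + y`
with `x, y ∈ X`, also `z ∈ X`. -/
def Midconvex {G : Type*} [AddCommGroup G] (X : Set G) : Prop :=
  ∀ x ∈ X, ∀ y ∈ X, ∀ z : G, 2 • z = x + y → z ∈ X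

/-!
Pulling `X` back along the line `n ↦ x + n • (y - x)` gives a midconvex set `S ⊆ ℤ`
containing `0` and `1`. A midconvex `S ⊆ ℤ` containing two consecutive integers `q - 1, q`
and some `m > q` also contains `q + 1`: one of `q - 1 + m`, `q + m` is even, and its half is an
element of `S` strictly between `q` and `m`, so we may descend to it. Climbing up from
`{0, 1}` (and, after negating `S`, down from it) fills every gap.
-/

open scoped Pointwise

namespace Midconvex

variable {G H : Type*} [AddCommGroup G] [AddCommGroup H]

theorem preimage_add_map {X : Set G} (hX : Midconvex X) (f : H →+ G) (x : G) :
    Midconvex ((fun h => x + f h) ⁻¹' X) := by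
  intro a ha b hb c hc
  refine hX _ ha _ hb _ ?_
  calc 2 • (x + f c) = 2 • x + f (2 • c) := by rw [smul_add, map_nsmul]
    _ = (x + f a) + (x + f b) := by rw [hc, map_add, two_nsmul]; abel

theorem neg {X : Set G} (hX : Midconvex X) : Midconvex (-X) := by
  intro a ha b hb c hc
  refine Set.mem_neg.2 (hX _ ha _ hb _ ?_)
  rw [smul_neg, hc, neg_add]

variable {S : Set ℤ}

theorem add_one_mem_of_lt (hS : Midconvex S) {q m : ℤ} (hq₁ : q - 1 ∈ S) (hq : q ∈ S)
    (hm : m ∈ S) (hqm : q < m) : q + 1 ∈ S := by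
  rcases (Int.add_one_le_iff.2 hqm).eq_or_lt with rfl | hlt
  · exact hm
  obtain ⟨c, hc, hqc, hcm⟩ : ∃ c ∈ S, q < c ∧ c < m := by
    rcases Int.even_or_odd (q + m) with ⟨c, hc⟩ | ⟨c, hc⟩
    · exact ⟨c, hS q hq m hm c (by rw [two_nsmul]; omega), by omega, by omega⟩
    · exact ⟨c, hS (q - 1) hq₁ m hm c (by rw [two_nsmul]; omega), by omega, by omega⟩
  exact hS.add_one_mem_of_lt hq₁ hq hc hqc
termination_by (m - q).toNat

theorem mem_of_le_of_le (hS : Midconvex S) {a m n : ℤ} (ha : a ∈ S) (ha₁ : a + 1 ∈ S)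
    (hm : m ∈ S) (han : a ≤ n) (hnm : n ≤ m) : n ∈ S := by
  have climb : ∀ p, a + 1 ≤ p → p ≤ m → p - 1 ∈ S ∧ p ∈ S := by
    intro p hp
    induction p, hp using Int.leInduction with
    | base => exact fun _ => ⟨by simpa using ha, ha₁⟩
    | succ p hp ih =>
      intro hpm
      obtain ⟨hp₁, hp'⟩ := ih (by omega)
      exact ⟨by simpa using hp', hS.add_one_mem_of_lt hp₁ hp' hm (by omega)⟩
  rcases han.eq_or_lt with rfl | hlt
  · exact ha
  · exact (climb n hlt hnm).2

theorem ordConnected (hS : Midconvex S) {a : ℤ} (ha : a ∈ S) (ha₁ : a + 1 ∈ S) :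
    S.OrdConnected := by
  refine ⟨fun k hk m hm n ⟨hkn, hnm⟩ => ?_⟩
  rcases le_or_gt a n with han | hna
  · exact hS.mem_of_le_of_le ha ha₁ hm han hnm
  · have h := hS.neg.mem_of_le_of_le (a := -(a + 1)) (m := -k) (n := -n)
      (by simpa using ha₁) (by simpa using ha) (by simpa using hk) (by omega) (by omega)
    simpa using h

end Midconvex

theorem stmt_0 {G : Type*} [AddCommGroup G] (X : Set G) (hX : Midconvex X)
    (x : G) (hx : x ∈ X) (y : G) (hy : y ∈ X) :
    ∀ k ∈ {n : ℤ | x + n • (y - x) ∈ X}, ∀ m ∈ {n : ℤ | x + n • (y - x) ∈ X},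
      ∀ n : ℤ, k ≤ n → n ≤ m → n ∈ {n : ℤ | x + n • (y - x) ∈ X} := by
  intro k hk m hm n hkn hnm
  have hS : Midconvex {n : ℤ | x + n • (y - x) ∈ X} :=
    hX.preimage_add_map (zmultiplesHom G (y - x)) x
  have hS_conn := hS.ordConnected (a := 0) (by simpa using hx) (by simpa using hy)
  exact hS_conn.out hk hm ⟨hkn, hnm⟩
end

section
/- A subset X of an abelian group G is midconvex if and only if for every g ∈ G and x ∈ X, the set {n ∈ ℤ : x + n•g ∈ X} equals C ∩ H for some order-convex set C ⊆ ℤ and some subgroup H ⊆ ℤ such that the quotient group ℤ/H has no elements of even order (no nonzero element whose order is even). -/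
/-- A set of integers is order-convex. -/
def OrderConvexZ (C : Set ℤ) : Prop :=
  ∀ k ∈ C, ∀ m ∈ C, ∀ n : ℤ, k ≤ n → n ≤ m → n ∈ C

/-!
On a line `n ↦ x + n • g` a midconvex set traces a midconvex set `S ⊆ ℤ`. Between two consecutive
elements of `S` the gap is odd, since otherwise its midpoint would lie in `S`; and two adjacent gaps
are equal, since their sum is even, so the midpoint of the outer ends lies in `S` and can only be the
middle element. Hence `S` is the trace of `dℤ`, `d` odd, on its order-convex hull, and `ℤ ⧸ dℤ` has
odd order. Conversely, for `g = z - x` the trace contains `0` and `2`, hence `1`, because `2 ∈ H`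
forces `1 ∈ H` when `ℤ ⧸ H` has no element of order `2`.
-/

theorem Midconvex.preimage_add_zsmul {G : Type*} [AddCommGroup G] {X : Set G}
    (hX : Midconvex X) (x g : G) : Midconvex {n : ℤ | x + n • g ∈ X} := by
  intro m hm n hn k hk
  refine hX _ hm _ hn _ ?_
  rw [two_nsmul] at hk ⊢
  calc x + k • g + (x + k • g) = x + x + (k + k) • g := by rw [add_zsmul]; abel
    _ = x + m • g + (x + n • g) := by rw [hk, add_zsmul]; abel

theorem Midconvex.mem_of_add_eq {S : Set ℤ} (hS : Midconvex S) {a b m : ℤ} (ha : a ∈ S)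
    (hb : b ∈ S) (h : a + b = m + m) : m ∈ S :=
  hS a ha b hb m (by rw [two_nsmul, h])

def intervalHull (S : Set ℤ) : Set ℤ :=
  {n | ∃ p ∈ S, ∃ q ∈ S, p ≤ n ∧ n ≤ q}

theorem orderConvexZ_intervalHull (S : Set ℤ) : OrderConvexZ (intervalHull S) :=
  fun _ ⟨p, hp, _⟩ _ ⟨_, _, q, hq, _⟩ _ _ _ => ⟨p, hp, q, hq, by omega⟩

theorem subset_intervalHull (S : Set ℤ) : S ⊆ intervalHull S :=
  fun n hn => ⟨n, hn, n, hn, le_rfl, le_rfl⟩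

theorem Set.Subsingleton.intervalHull_eq {S : Set ℤ} (hS : S.Subsingleton) :
    intervalHull S = S := by
  refine Set.Subset.antisymm ?_ (subset_intervalHull S)
  rintro n ⟨p, hp, q, hq, hpn, hnq⟩
  rwa [show n = p by have := hS hp hq; omega]

structure AdjacentIn {α : Type*} [Preorder α] (S : Set α) (a b : α) : Prop where
  left_mem : a ∈ S
  right_mem : b ∈ S
  lt : a < b
  le_of_lt : ∀ n ∈ S, a < n → b ≤ n

theorem AdjacentIn.right_unique {α : Type*} [PartialOrder α] {S : Set α} {a b c : α}
    (hab : AdjacentIn S a b) (hac : AdjacentIn S a c) : b = c :=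
  le_antisymm (hab.le_of_lt c hac.right_mem hac.lt) (hac.le_of_lt b hab.right_mem hab.lt)

theorem exists_adjacentIn {S : Set ℤ} {a b : ℤ} (ha : a ∈ S) (hb : b ∈ S) (hab : a < b) :
    ∃ c, AdjacentIn S a c ∧ c ≤ b := by
  obtain ⟨c, ⟨hc, hac⟩, hmin⟩ := Int.exists_least_of_bdd (P := fun n => n ∈ S ∧ a < n)
    ⟨a, fun _ hz => hz.2.le⟩ ⟨b, hb, hab⟩
  exact ⟨c, ⟨ha, hc, hac, fun n hn han => hmin n ⟨hn, han⟩⟩, hmin b ⟨hb, hab⟩⟩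

namespace AdjacentIn

variable {S : Set ℤ} {a b c e : ℤ}

theorem odd_sub (hS : Midconvex S) (hab : AdjacentIn S a b) : Odd (b - a) := by
  rcases Int.even_or_odd (b - a) with ⟨k, hk⟩ | hodd
  · have := hab.lt
    have hmid := hS.mem_of_add_eq hab.left_mem hab.right_mem (m := a + k) (by omega)
    have := hab.le_of_lt _ hmid (by omega)
    omega
  · exact hodd

theorem sub_eq_sub (hS : Midconvex S) (hab : AdjacentIn S a b) (hbc : AdjacentIn S b c) :
    b - a = c - b := by
  obtain ⟨r, hr⟩ := hab.odd_sub hS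
  obtain ⟨s, hs⟩ := hbc.odd_sub hS
  have := hab.lt
  have := hbc.lt
  have hmid := hS.mem_of_add_eq hab.left_mem hbc.right_mem (m := a + r + s + 1) (by omega)
  have hbm := hab.le_of_lt _ hmid (by omega)
  have hmb : ¬ b < a + r + s + 1 := fun h => by
    have := hbc.le_of_lt _ hmid h
    omega
  omega

theorem sub_eq_of_le (hS : Midconvex S) (hab : AdjacentIn S a b) (hce : AdjacentIn S c e)
    (hac : a ≤ c) : b - a = e - c := by
  obtain ⟨k, hk⟩ : ∃ k : ℕ, c - a = k := ⟨(c - a).toNat, by omega⟩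
  induction k using Nat.strong_induction_on generalizing a b with
  | _ k ih =>
  rcases hac.eq_or_lt with rfl | hac
  · rw [hab.right_unique hce]
  rcases (hab.le_of_lt c hce.left_mem hac).eq_or_lt with rfl | hbc
  · exact hab.sub_eq_sub hS hce
  obtain ⟨b', hbb', -⟩ := exists_adjacentIn hab.right_mem hce.left_mem hbc
  rw [hab.sub_eq_sub hS hbb']
  exact ih (c - b).toNat (by have := hab.lt; omega) hbb' hbc.le (by omega)

theorem sub_eq (hS : Midconvex S) (hab : AdjacentIn S a b) (hce : AdjacentIn S c e) :
    b - a = e - c := by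
  rcases le_total a c with hac | hca
  · exact hab.sub_eq_of_le hS hce hac
  · exact (hce.sub_eq_of_le hS hab hca).symm

end AdjacentIn

namespace Midconvex

variable {S : Set ℤ} {a d : ℤ}

theorem adjacentIn_add (hS : Midconvex S) (had : AdjacentIn S a (a + d)) {p q : ℤ}
    (hp : p ∈ S) (hq : q ∈ S) (hpq : p < q) : AdjacentIn S p (p + d) := by
  obtain ⟨c, hpc, -⟩ := exists_adjacentIn hp hq hpq
  rwa [show p + d = c by have := had.sub_eq hS hpc; omega]

theorem mem_iff_dvd_sub (hS : Midconvex S) (had : AdjacentIn S a (a + d)) {p q n : ℤ}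
    (hp : p ∈ S) (hq : q ∈ S) (hpn : p ≤ n) (hnq : n ≤ q) : n ∈ S ↔ d ∣ n - p := by
  obtain ⟨k, hk⟩ : ∃ k : ℕ, n - p = k := ⟨(n - p).toNat, by omega⟩
  induction k using Nat.strong_induction_on generalizing p with
  | _ k ih =>
  rcases hpn.eq_or_lt with rfl | hpn
  · simpa using hp
  have hpd := hS.adjacentIn_add had hp hq (hpn.trans_le hnq)
  have hd : 0 < d := by linarith [had.lt]
  have step (h : p + d ≤ n) : n ∈ S ↔ d ∣ n - p := by
    rw [ih (n - (p + d)).toNat (by omega) hpd.right_mem h (by omega), sub_add_eq_sub_sub,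
      dvd_sub_self_right]
  exact ⟨fun hn => (step (hpd.le_of_lt n hn hpn)).1 hn,
    fun hdvd => (step (by have := Int.le_of_dvd (by omega) hdvd; omega)).2 hdvd⟩

theorem eq_intervalHull_inter_zmultiples (hS : Midconvex S) (h0 : 0 ∈ S)
    (had : AdjacentIn S a (a + d)) : S = intervalHull S ∩ AddSubgroup.zmultiples d := by
  have hdvd : ∀ n ∈ S, d ∣ n := fun n hn => by
    rcases le_total 0 n with h | h
    · simpa using (hS.mem_iff_dvd_sub had h0 hn h le_rfl).1 hn
    · simpa using (hS.mem_iff_dvd_sub had hn h0 h le_rfl).1 h0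
  ext n
  simp only [Set.mem_inter_iff, SetLike.mem_coe, Int.mem_zmultiples_iff]
  refine ⟨fun hn => ⟨subset_intervalHull S hn, hdvd n hn⟩,
    fun ⟨⟨p, hp, q, hq, hpn, hnq⟩, hn⟩ => ?_⟩
  exact (hS.mem_iff_dvd_sub had hp hq hpn hnq).2 (dvd_sub hn (hdvd p hp))

theorem exists_odd_eq_intervalHull_inter_zmultiples (hS : Midconvex S) (h0 : 0 ∈ S) :
    ∃ d : ℤ, Odd d ∧ S = intervalHull S ∩ AddSubgroup.zmultiples d := by
  by_cases hS1 : S.Subsingleton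
  · refine ⟨1, odd_one, ?_⟩
    rw [Int.zmultiples_one, AddSubgroup.coe_top, Set.inter_univ, hS1.intervalHull_eq]
  obtain ⟨a, ha, b, hb, hab⟩ : ∃ a ∈ S, ∃ b ∈ S, a < b := by
    obtain ⟨s, hs, t, ht, hst⟩ := Set.not_subsingleton_iff.1 hS1
    rcases hst.lt_or_gt with h | h
    exacts [⟨s, hs, t, ht, h⟩, ⟨t, ht, s, hs, h⟩]
  obtain ⟨c, hac, -⟩ := exists_adjacentIn ha hb hab
  have had : AdjacentIn S a (a + (c - a)) := by rwa [add_sub_cancel]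
  exact ⟨c - a, hac.odd_sub hS, hS.eq_intervalHull_inter_zmultiples h0 had⟩

end Midconvex

theorem not_even_addOrderOf_of_zsmul_eq_zero {A : Type*} [AddGroup A] {q : A} {d : ℤ}
    (hd : Odd d) (hq : d • q = 0) : ¬ Even (addOrderOf q) := by
  rintro ⟨k, hk⟩
  have := addOrderOf_dvd_iff_zsmul_eq_zero.2 hq
  rw [hk] at this
  push_cast at this
  exact Int.not_even_iff_odd.2 hd (even_iff_two_dvd.2 (dvd_trans ⟨k, by ring⟩ this))

theorem not_even_addOrderOf_quotient_zmultiples {d : ℤ} (hd : Odd d)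
    (q : ℤ ⧸ AddSubgroup.zmultiples d) : ¬ Even (addOrderOf q) := by
  refine not_even_addOrderOf_of_zsmul_eq_zero hd ?_
  induction q using QuotientAddGroup.induction_on with
  | H m =>
    rw [← QuotientAddGroup.mk_zsmul, QuotientAddGroup.eq_zero_iff, smul_eq_mul,
      Int.mem_zmultiples_iff]
    exact dvd_mul_right d m

theorem eq_zero_of_two_nsmul_eq_zero {A : Type*} [AddMonoid A]
    (hA : ∀ q : A, addOrderOf q ≠ 0 → ¬ Even (addOrderOf q)) {q : A} (hq : 2 • q = 0) :
    q = 0 := by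
  have hdvd := addOrderOf_dvd_of_nsmul_eq_zero hq
  rcases (Nat.dvd_prime Nat.prime_two).1 hdvd with h | h
  · exact AddMonoid.addOrderOf_eq_one_iff.1 h
  · exact (hA q (by omega) (by rw [h]; exact even_two)).elim

theorem one_mem_of_two_mem {H : AddSubgroup ℤ}
    (hH : ∀ q : ℤ ⧸ H, addOrderOf q ≠ 0 → ¬ Even (addOrderOf q)) (h2 : (2 : ℤ) ∈ H) :
    (1 : ℤ) ∈ H := by
  rw [← QuotientAddGroup.eq_zero_iff]
  refine eq_zero_of_two_nsmul_eq_zero hH ?_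
  rwa [← QuotientAddGroup.mk_nsmul, QuotientAddGroup.eq_zero_iff]

theorem stmt_1 {G : Type*} [AddCommGroup G] (X : Set G) :
    Midconvex X ↔
      ∀ g : G, ∀ x ∈ X, ∃ (C : Set ℤ) (H : AddSubgroup ℤ),
        OrderConvexZ C ∧
        (∀ q : ℤ ⧸ H, addOrderOf q ≠ 0 → ¬ Even (addOrderOf q)) ∧
        {n : ℤ | x + n • g ∈ X} = C ∩ (H : Set ℤ) := by
  constructor
  · intro hX g x hx
    obtain ⟨d, hd, hS⟩ :=
      (hX.preimage_add_zsmul x g).exists_odd_eq_intervalHull_inter_zmultiples (by simpa using hx)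
    exact ⟨_, AddSubgroup.zmultiples d, orderConvexZ_intervalHull _,
      fun q _ => not_even_addOrderOf_quotient_zmultiples hd q, hS⟩
  · intro h x hx y hy z hz
    obtain ⟨C, H, hC, hH, hS⟩ := h (z - x) x hx
    have h0 : (0 : ℤ) ∈ C ∩ H := hS ▸ (by simpa using hx)
    have h2 : (2 : ℤ) ∈ C ∩ H := hS ▸ show x + (2 : ℤ) • (z - x) ∈ X by
      convert hy using 1
      rw [two_zsmul, ← two_nsmul, smul_sub, hz]
      abel
    have h1 : (1 : ℤ) ∈ C ∩ H :=
      ⟨hC 0 h0.1 2 h2.1 1 zero_le_one one_le_two, one_mem_of_two_mem hH h2.2⟩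
    rw [← hS] at h1
    simpa using h1
end

section
/- If X is a subset of an abelian group G, x ∈ X, y ∈ X, z ∈ G \ X, 2z = x + y, and the set Z = {n ∈ ℤ : x + n•(z - x) ∈ X} equals C ∩ H for an order-convex set C ⊆ ℤ and a subgroup H ⊆ ℤ with ℤ/H having no elements of even order, then a contradiction follows. Equivalently: if for every g ∈ G and x ∈ X the set {n ∈ ℤ : x + n•g ∈ X} has the form C ∩ H as above, then X is midconvex. -/
theorem QuotientAddGroup.addOrderOf_mk_eq_two {A : Type*} [AddGroup A] {H : AddSubgroup A}
    [H.Normal] {a : A} (ha : a ∉ H) (h2a : 2 • a ∈ H) : addOrderOf (a : A ⧸ H) = 2 :=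
  addOrderOf_eq_prime (by rwa [← QuotientAddGroup.mk_nsmul, QuotientAddGroup.eq_zero_iff])
    (by rwa [Ne, QuotientAddGroup.eq_zero_iff])

theorem add_two_zsmul_sub_eq_of_two_nsmul_eq {G : Type*} [AddCommGroup G] {x y z : G}
    (h : 2 • z = x + y) : x + (2 : ℤ) • (z - x) = y := by
  rw [smul_sub, two_zsmul, ← two_nsmul, h]
  abel

theorem stmt_2 {G : Type*} [AddCommGroup G] (X : Set G)
    (x y z : G) (hx : x ∈ X) (hy : y ∈ X) (hz : z ∉ X) (h2 : 2 • z = x + y)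
    (C : Set ℤ) (H : AddSubgroup ℤ) (hC : OrderConvexZ C)
    (hH : ∀ q : ℤ ⧸ H, addOrderOf q ≠ 0 → ¬ Even (addOrderOf q))
    (hZ : {n : ℤ | x + n • (z - x) ∈ X} = C ∩ (H : Set ℤ)) : False := by
  have mem_Z (n : ℤ) : n ∈ C ∩ (H : Set ℤ) ↔ x + n • (z - x) ∈ X := by rw [← hZ]; rfl
  have zero_mem : (0 : ℤ) ∈ C ∩ (H : Set ℤ) := (mem_Z 0).2 (by simpa using hx)
  have two_mem : (2 : ℤ) ∈ C ∩ (H : Set ℤ) :=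
    (mem_Z 2).2 (by rwa [add_two_zsmul_sub_eq_of_two_nsmul_eq h2])
  have one_not_mem : (1 : ℤ) ∉ C ∩ (H : Set ℤ) := fun h => hz (by simpa using (mem_Z 1).1 h)
  have one_mem_C : (1 : ℤ) ∈ C := hC 0 zero_mem.1 2 two_mem.1 1 zero_le_one one_le_two
  have one_not_mem_H : (1 : ℤ) ∉ H := fun h => one_not_mem ⟨one_mem_C, h⟩
  have hord := QuotientAddGroup.addOrderOf_mk_eq_two one_not_mem_H (by simpa using two_mem.2)
  exact hH _ (by rw [hord]; norm_num) (by rw [hord]; exact even_two)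
end

section
/- Let X be a midconvex subset of an abelian group G and x ∈ X. If a ∈ X - x (i.e., x + a ∈ X) and a has finite order in G, then 2a ∈ X - x (i.e., x + 2a ∈ X). -/
/-!
Write some `n > 0` with `n • a = 0` as `2 ^ s * m`, `m` odd, and pick `k ≥ 1` with `m ∣ 2 ^ k - 1`
(Euler). Then `2 ^ k • a = a + b` with `2 ^ s • b = 0`, so taking midpoints `s` times starting from
`x + a = x + a + 2 ^ s • b` gives `x + 2 ^ k • a = x + a + b ∈ X`; taking midpoints with `x`
another `k - 1` times brings this down to `x + 2 • a`.
-/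

namespace Midconvex

variable {G : Type*} [AddCommGroup G] {X : Set G}

theorem add_mem_of_add_two_nsmul_mem (hX : Midconvex X) {y g : G} (hy : y ∈ X)
    (h : y + 2 • g ∈ X) : y + g ∈ X :=
  hX y hy _ h _ (by rw [smul_add, two_smul ℕ y]; abel)

theorem add_mem_of_two_pow_nsmul_eq_zero (hX : Midconvex X) {y : G} (hy : y ∈ X) {j : ℕ} :
    ∀ {g : G}, 2 ^ j • g = 0 → y + g ∈ X := by
  induction j with
  | zero => intro g hg; rw [pow_zero, one_smul] at hg; simpa [hg] using hy
  | succ j ih =>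
    intro g hg
    refine hX.add_mem_of_add_two_nsmul_mem hy (ih ?_)
    rwa [smul_smul, ← pow_succ]

theorem add_mem_of_add_two_pow_nsmul_mem (hX : Midconvex X) {x : G} (hx : x ∈ X) {k : ℕ} :
    ∀ {w : G}, x + 2 ^ k • w ∈ X → x + w ∈ X := by
  induction k with
  | zero => intro w hw; simpa using hw
  | succ k ih =>
    intro w hw
    refine hX.add_mem_of_add_two_nsmul_mem hx (ih ?_)
    rwa [smul_smul, ← pow_succ]

end Midconvex

theorem Nat.exists_dvd_two_pow_mul_two_pow_sub_one {n : ℕ} (hn : n ≠ 0) :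
    ∃ s k : ℕ, 0 < k ∧ n ∣ 2 ^ s * (2 ^ k - 1) := by
  obtain ⟨s, m, hm, rfl⟩ := Nat.exists_eq_two_pow_mul_odd hn
  have hEuler : 2 ^ m.totient ≡ 1 [MOD m] := Nat.ModEq.pow_totient (Nat.coprime_two_left.mpr hm)
  refine ⟨s, m.totient, Nat.totient_pos.mpr hm.pos, Nat.mul_dvd_mul_left _ ?_⟩
  exact (Nat.modEq_iff_dvd' Nat.one_le_two_pow).mp hEuler.symm

theorem stmt_3 {G : Type*} [AddCommGroup G] (X : Set G) (hX : Midconvex X)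
    (x : G) (hx : x ∈ X) (a : G) (ha : x + a ∈ X)
    (hfin : ∃ n : ℕ, 0 < n ∧ n • a = 0) :
    x + 2 • a ∈ X := by
  obtain ⟨n, hn, hna⟩ := hfin
  obtain ⟨s, k, hk, d, hd⟩ := Nat.exists_dvd_two_pow_mul_two_pow_sub_one hn.ne'
  have htorsion : 2 ^ s • (2 ^ k - 1) • a = 0 := by
    rw [smul_smul, hd, mul_comm, mul_smul, hna, smul_zero]
  have hsplit : x + 2 ^ k • a = (x + a) + (2 ^ k - 1) • a := by
    conv_lhs => rw [← Nat.sub_add_cancel (Nat.one_le_two_pow (n := k)), add_smul, one_smul]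
    abel
  have hk_mem : x + 2 ^ k • a ∈ X :=
    hsplit ▸ hX.add_mem_of_two_pow_nsmul_eq_zero ha htorsion
  refine hX.add_mem_of_add_two_pow_nsmul_mem hx (k := k - 1) ?_
  rwa [smul_smul, ← pow_succ, Nat.sub_add_cancel hk]
end

section
/- If X is a midconvex subset of a periodic abelian group G and x ∈ X, then X - x is a subgroup of G and every element of the quotient group G/(X - x) has odd order. -/
lemma exists_add_eq_and_nsmul_eq_zero {G : Type*} [AddCommGroup G] {k l : ℕ}
    (hkl : k.Coprime l) {g : G} (hg : (k * l) • g = 0) :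
    ∃ p q : G, p + q = g ∧ k • p = 0 ∧ l • q = 0 := by
  obtain ⟨c, d, hcd⟩ := Nat.isCoprime_iff_coprime.2 hkl
  have hg' : ((k : ℤ) * l) • g = 0 := by exact_mod_cast hg
  refine ⟨(d * l) • g, (c * k) • g, ?_, ?_, ?_⟩
  · rw [← add_smul, add_comm, hcd, one_smul]
  · rw [← natCast_zsmul, smul_smul, show (k : ℤ) * (d * l) = d * (k * l) by ring, mul_smul,
      hg', smul_zero]
  · rw [← natCast_zsmul, smul_smul, show (l : ℤ) * (c * k) = c * (k * l) by ring, mul_smul,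
      hg', smul_zero]

namespace Midconvex

variable {G : Type*} [AddCommGroup G] {Y : Set G}

lemma image_sub_const {X : Set G} (hX : Midconvex X) (x : G) : Midconvex ((· - x) '' X) := by
  rintro _ ⟨u, hu, rfl⟩ _ ⟨v, hv, rfl⟩ z hz
  dsimp only at hz
  refine ⟨z + x, hX u hu v hv (z + x) ?_, add_sub_cancel_right z x⟩
  rw [smul_add, hz, two_nsmul x]
  abel

lemma mem_of_two_nsmul_mem (hY : Midconvex Y) (h0 : (0 : G) ∈ Y) {z : G} (hz : 2 • z ∈ Y) :
    z ∈ Y :=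
  hY _ hz 0 h0 z (add_zero _).symm

lemma add_mem_of_two_pow_nsmul_eq_zero_s5 (hY : Midconvex Y) {t : G} (ht : t ∈ Y) :
    ∀ {b : ℕ} {s : G}, 2 ^ b • s = 0 → t + s ∈ Y
  | 0, s, hs => by rw [pow_zero, one_smul] at hs; rwa [hs, add_zero]
  | b + 1, s, hs => by
    have h2s : t + 2 • s ∈ Y :=
      hY.add_mem_of_two_pow_nsmul_eq_zero_s5 ht (by rwa [smul_smul, ← pow_succ])
    exact hY t ht _ h2s _ (by rw [smul_add, two_nsmul t]; abel)

lemma add_mem_of_odd_addOrderOf (hY : Midconvex Y) (h0 : (0 : G) ∈ Y) {u v : G} (hu : u ∈ Y)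
    (hv : v ∈ Y) (hodd : Odd (addOrderOf (u + v))) : u + v ∈ Y := by
  set g := u + v
  set m := addOrderOf g
  obtain ⟨h, hh⟩ : ∃ h, 2 * h = m + 1 := ⟨(m + 1) / 2, by obtain ⟨j, hj⟩ := hodd; omega⟩
  have halve : ∀ n : ℕ, (2 * h * n) • g = n • g := fun n =>
    nsmul_eq_nsmul_iff_modEq.2 (by rw [hh, add_mul, one_mul]; exact Nat.mul_add_mod_self_left ..)
  have hpow : ∀ j : ℕ, h ^ (j + 1) • g ∈ Y := by
    intro j
    induction j with
    | zero =>
      exact hY u hu v hv _ (by rw [pow_one, smul_smul, ← mul_one (2 * h), halve, one_smul])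
    | succ j ih =>
      refine hY.mem_of_two_nsmul_mem h0 ?_
      rwa [smul_smul, pow_succ, mul_comm _ h, ← mul_assoc, halve]
  have hcop : h.Coprime m := Nat.Coprime.coprime_mul_left <| by
    rw [hh]; exact Nat.coprime_self_add_left.2 (Nat.coprime_one_left m)
  have hφ : h ^ m.totient • g = g := by
    rw [nsmul_eq_nsmul_iff_modEq.2 (Nat.ModEq.pow_totient hcop), one_smul]
  obtain ⟨j, hj⟩ := Nat.exists_eq_add_of_le (Nat.totient_pos.2 hodd.pos)
  rw [← hφ, hj, add_comm]
  exact hpow j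

lemma add_mem (hY : Midconvex Y) (h0 : (0 : G) ∈ Y) {u v : G} (hu : u ∈ Y) (hv : v ∈ Y)
    (hfin : IsOfFinAddOrder (u + v)) : u + v ∈ Y := by
  obtain ⟨a, m, hm, hn⟩ := Nat.exists_eq_two_pow_mul_odd hfin.addOrderOf_pos.ne'
  obtain ⟨p, q, hpq, hp, hq⟩ := exists_add_eq_and_nsmul_eq_zero
    ((Nat.coprime_two_right.2 hm).pow_right a) (by rw [mul_comm, ← hn, addOrderOf_nsmul_eq_zero])
  have hvq : v + -q ∈ Y := hY.add_mem_of_two_pow_nsmul_eq_zero_s5 hv (by rw [smul_neg, hq, neg_zero])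
  have hp_mem : p ∈ Y := by
    have hsum : u + (v + -q) = p := by rw [← add_assoc, ← hpq]; abel
    rw [← hsum]
    refine hY.add_mem_of_odd_addOrderOf h0 hu hvq ?_
    rw [hsum]
    exact hm.of_dvd_nat (addOrderOf_dvd_of_nsmul_eq_zero hp)
  rw [← hpq]
  exact hY.add_mem_of_two_pow_nsmul_eq_zero_s5 hp_mem hq

def addSubgroup (hY : Midconvex Y) (h0 : (0 : G) ∈ Y) (htor : IsAddTorsion G) :
    AddSubgroup G :=
  let S : AddSubmonoid G :=
    { carrier := Y
      zero_mem' := h0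
      add_mem' := fun hu hv => hY.add_mem h0 hu hv (htor _) }
  { S with
    neg_mem' := fun {u} hu =>
      AddSubmonoid.multiples_le.2 hu <| (htor u).mem_multiples_iff_mem_zmultiples.2 <|
        neg_mem (AddSubgroup.mem_zmultiples u) }

lemma coe_addSubgroup (hY : Midconvex Y) (h0 : (0 : G) ∈ Y) (htor : IsAddTorsion G) :
    (hY.addSubgroup h0 htor : Set G) = Y :=
  rfl

lemma odd_addOrderOf_quotient (hY : Midconvex Y) (h0 : (0 : G) ∈ Y) (htor : IsAddTorsion G)
    (q : G ⧸ hY.addSubgroup h0 htor) : Odd (addOrderOf q) := by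
  refine QuotientAddGroup.induction_on q fun g => ?_
  obtain ⟨a, m, hm, hn⟩ := Nat.exists_eq_two_pow_mul_odd (htor g).addOrderOf_pos.ne'
  have hmg : m • g ∈ Y := by
    simpa only [zero_add] using hY.add_mem_of_two_pow_nsmul_eq_zero_s5 h0
      (by rw [smul_smul, ← hn, addOrderOf_nsmul_eq_zero] : 2 ^ a • m • g = 0)
  have hq : m • (g : G ⧸ hY.addSubgroup h0 htor) = 0 :=
    (QuotientAddGroup.eq_zero_iff _).2 hmg
  exact hm.of_dvd_nat (addOrderOf_dvd_of_nsmul_eq_zero hq)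

end Midconvex

theorem stmt_5 {G : Type*} [AddCommGroup G]
    (htor : ∀ g : G, ∃ n : ℕ, 0 < n ∧ n • g = 0)
    (X : Set G) (hX : Midconvex X) (x : G) (hx : x ∈ X) :
    ∃ H : AddSubgroup G, (H : Set G) = (· - x) '' X ∧
      ∀ q : G ⧸ H, Odd (addOrderOf q) := by
  have htor' : IsAddTorsion G := fun g => isOfFinAddOrder_iff_nsmul_eq_zero.2 (htor g)
  have h0 : (0 : G) ∈ (· - x) '' X := ⟨x, hx, sub_self x⟩
  have hY := hX.image_sub_const x
  exact ⟨hY.addSubgroup h0 htor', hY.coe_addSubgroup h0 htor', hY.odd_addOrderOf_quotient h0 htor'⟩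
end

section
/- Let G be an abelian group and X ⊆ G a subset such that for some x ∈ X, X - x is a subgroup H of G and the quotient group G/H has no elements of order 2. Then X is midconvex. -/
theorem mem_iff_sub_mem_of_coe_eq_image_sub {G : Type*} [AddCommGroup G] {X : Set G} {x : G}
    {H : AddSubgroup G} (hH : (H : Set G) = (· - x) '' X) (w : G) : w ∈ X ↔ w - x ∈ H := by
  rw [← SetLike.mem_coe, hH, (sub_left_injective (b := x)).mem_set_image]

theorem stmt_6_general {G : Type*} [AddCommGroup G] (X : Set G) (x : G)
    (H : AddSubgroup G) (hH : (H : Set G) = (· - x) '' X)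
    (h2 : ∀ g : G, 2 • g ∈ H → g ∈ H) :
    Midconvex X := by
  intro u hu v hv z hz
  rw [mem_iff_sub_mem_of_coe_eq_image_sub hH] at hu hv ⊢
  apply h2
  have hsum : 2 • (z - x) = (u - x) + (v - x) := by
    rw [smul_sub, hz]; abel
  rw [hsum]
  exact H.add_mem hu hv

theorem stmt_6 {G : Type*} [AddCommGroup G] (X : Set G) (x : G) (hx : x ∈ X)
    (H : AddSubgroup G) (hH : (H : Set G) = (· - x) '' X)
    (h2 : ∀ g : G, 2 • g ∈ H → g ∈ H) :
    Midconvex X :=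
  stmt_6_general X x H hH h2
end

section
/- Let G be a subgroup of ℚ, C ⊆ ℚ an order-convex set, x ∈ G, and H a subgroup of G such that the quotient group G/H contains no elements of even order (equivalently, for g ∈ G, 2g ∈ H implies g ∈ H). Then the set X = C ∩ (H + x) is midconvex in G. -/
def OrderConvexQ (C : Set ℚ) : Prop :=
  ∀ a ∈ C, ∀ b ∈ C, ∀ c : ℚ, a ≤ c → c ≤ b → c ∈ C

theorem OrderConvexQ.ordConnected {C : Set ℚ} (hC : OrderConvexQ C) : C.OrdConnected :=
  ⟨fun a ha b hb _ hc => hC a ha b hb _ hc.1 hc.2⟩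

theorem mem_uIcc_of_two_nsmul_eq_add {α : Type*} [AddCommMonoid α] [LinearOrder α]
    [IsOrderedCancelAddMonoid α] {u v z : α} (h : 2 • z = u + v) : z ∈ Set.uIcc u v := by
  rw [two_nsmul] at h
  have between {a b : α} (hab : a ≤ b) (h : z + z = a + b) : a ≤ z ∧ z ≤ b := by
    constructor <;> by_contra! hlt
    · exact (add_lt_add hlt (hlt.trans_le hab)).ne h
    · exact (add_lt_add (hab.trans_lt hlt) hlt).ne' h
  rcases le_total u v with huv | hvu
  · exact Set.mem_uIcc.2 (Or.inl (between huv h))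
  · exact Set.mem_uIcc.2 (Or.inr (between hvu (h.trans (add_comm u v))))

theorem Set.OrdConnected.mem_of_two_nsmul_eq_add {α : Type*} [AddCommMonoid α] [LinearOrder α]
    [IsOrderedCancelAddMonoid α] {C : Set α} (hC : C.OrdConnected) {u v z : α} (hu : u ∈ C)
    (hv : v ∈ C) (h : 2 • z = u + v) : z ∈ C :=
  hC.uIcc_subset hu hv (mem_uIcc_of_two_nsmul_eq_add h)

theorem AddSubgroup.sub_mem_of_two_nsmul_eq_add {A : Type*} [AddCommGroup A] {G H : AddSubgroup A}
    (h2 : ∀ g ∈ G, 2 • g ∈ H → g ∈ H) {u v x z : A} (hx : x ∈ G) (hz : z ∈ G)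
    (hu : u - x ∈ H) (hv : v - x ∈ H) (h : 2 • z = u + v) : z - x ∈ H := by
  refine h2 _ (G.sub_mem hz hx) ?_
  have : 2 • (z - x) = (u - x) + (v - x) := by rw [nsmul_sub, h, two_nsmul]; abel
  exact this ▸ H.add_mem hu hv

theorem stmt_8_general (G : AddSubgroup ℚ) (C : Set ℚ) (hC : OrderConvexQ C)
    (x : ℚ) (hx : x ∈ G) (H : AddSubgroup ℚ)
    (h2 : ∀ g ∈ G, 2 • g ∈ H → g ∈ H) :
    ∀ u ∈ C ∩ ((· + x) '' (H : Set ℚ)), ∀ v ∈ C ∩ ((· + x) '' (H : Set ℚ)),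
      ∀ z ∈ G, 2 • z = u + v → z ∈ C ∩ ((· + x) '' (H : Set ℚ)) := by
  simp only [Set.image_add_right, Set.mem_inter_iff, Set.mem_preimage, ← sub_eq_add_neg,
    SetLike.mem_coe]
  rintro u ⟨huC, huH⟩ v ⟨hvC, hvH⟩ z hzG hz
  exact ⟨hC.ordConnected.mem_of_two_nsmul_eq_add huC hvC hz,
    AddSubgroup.sub_mem_of_two_nsmul_eq_add h2 hx hzG huH hvH hz⟩

theorem stmt_8 (G : AddSubgroup ℚ) (C : Set ℚ) (hC : OrderConvexQ C)
    (x : ℚ) (hx : x ∈ G) (H : AddSubgroup ℚ) (hHG : H ≤ G)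
    (h2 : ∀ g ∈ G, 2 • g ∈ H → g ∈ H) :
    ∀ u ∈ C ∩ ((· + x) '' (H : Set ℚ)), ∀ v ∈ C ∩ ((· + x) '' (H : Set ℚ)),
      ∀ z ∈ G, 2 • z = u + v → z ∈ C ∩ ((· + x) '' (H : Set ℚ)) :=
  stmt_8_general G C hC x hx H h2
end

section
/- Let G be a subgroup of ℚ. A nonempty set X ⊆ G is midconvex in G if and only if X = C ∩ (H + x) for some order-convex set C ⊆ ℚ, some x ∈ X, and some subgroup H of G such that the quotient group G/H contains no elements of even order. -/
def MidconvexIn {A : Type*} [AddGroup A] (G : AddSubgroup A) (X : Set A) : Prop :=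
  ∀ u ∈ X, ∀ v ∈ X, ∀ z ∈ G, 2 • z = u + v → z ∈ X

namespace MidconvexIn

section AddCommGroup

variable {A B : Type*} [AddCommGroup A] [AddCommGroup B] {G G' : AddSubgroup A} {X X' : Set A}

theorem mono (hX : MidconvexIn G X) (hG : G' ≤ G) : MidconvexIn G' X :=
  fun u hu v hv z hz => hX u hu v hv z (hG hz)

theorem inter (hX : MidconvexIn G X) (hX' : MidconvexIn G X') : MidconvexIn G (X ∩ X') :=
  fun u hu v hv z hz huv => ⟨hX u hu.1 v hv.1 z hz huv, hX' u hu.2 v hv.2 z hz huv⟩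

theorem comap (hX : MidconvexIn G X) (f : B →+ A) : MidconvexIn (G.comap f) (f ⁻¹' X) :=
  fun u hu v hv z hz huv => hX _ hu _ hv _ hz (by rw [← map_nsmul, huv, map_add])

theorem preimage_add_right (hX : MidconvexIn G X) {x : A} (hx : x ∈ G) :
    MidconvexIn G ((· + x) ⁻¹' X) := fun u hu v hv z hz huv =>
  hX _ hu _ hv _ (add_mem hz hx) (by rw [smul_add, huv]; module)

theorem image_add_right {H : AddSubgroup A} (hH : ∀ g ∈ G, 2 • g ∈ H → g ∈ H) {x : A}
    (hx : x ∈ G) : MidconvexIn G ((· + x) '' (H : Set A)) := by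
  rintro _ ⟨u, hu, rfl⟩ _ ⟨v, hv, rfl⟩ z hz huv
  refine ⟨z - x, hH _ (sub_mem hz hx) ?_, sub_add_cancel z x⟩
  convert add_mem hu hv using 1
  rw [smul_sub, huv]
  module

end AddCommGroup

theorem of_orderConvexQ {G : AddSubgroup ℚ} {C : Set ℚ} (hC : OrderConvexQ C) :
    MidconvexIn G C := by
  intro u hu v hv z _ huv
  rw [two_nsmul] at huv
  rcases le_total u v with huv' | huv'
  · exact hC u hu v hv z (by linarith) (by linarith)
  · exact hC v hv u hu z (by linarith) (by linarith)

end MidconvexIn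

namespace AddSubgroup

variable {A : Type*} [AddCommGroup A]

def twoSaturation (G S : AddSubgroup A) : AddSubgroup A where
  carrier := {q | q ∈ G ∧ ∃ k : ℕ, 2 ^ k • q ∈ S}
  add_mem' := by
    rintro p q ⟨hp, k, hpk⟩ ⟨hq, l, hql⟩
    refine ⟨add_mem hp hq, k + l, ?_⟩
    rw [show 2 ^ (k + l) • (p + q) = 2 ^ l • 2 ^ k • p + 2 ^ k • 2 ^ l • q by module]
    exact add_mem (S.nsmul_mem hpk _) (S.nsmul_mem hql _)
  zero_mem' := ⟨G.zero_mem, 0, by simp⟩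
  neg_mem' := by
    rintro q ⟨hq, k, hqk⟩
    exact ⟨neg_mem hq, k, by simpa using hqk⟩

theorem mem_twoSaturation_of_two_nsmul_mem {G S : AddSubgroup A} {g : A} (hg : g ∈ G)
    (h2g : 2 • g ∈ G.twoSaturation S) : g ∈ G.twoSaturation S := by
  obtain ⟨-, k, hk⟩ := h2g
  exact ⟨hg, k + 1, by convert hk using 1; module⟩

theorem exists_finset_of_mem_closure {s : Set A} {x : A} (hx : x ∈ closure s) :
    ∃ t : Finset A, ↑t ⊆ s ∧ x ∈ closure (t : Set A) := by
  rw [← SetLike.mem_coe, ← coe_toIntSubmodule, toIntSubmodule_closure] at hx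
  obtain ⟨t, hts, hxt⟩ := Submodule.mem_span_finite_of_mem_span hx
  refine ⟨t, hts, ?_⟩
  rwa [← SetLike.mem_coe, ← coe_toIntSubmodule, toIntSubmodule_closure]

end AddSubgroup

namespace MidconvexIn

variable {Y : Set ℤ} {a b : ℤ}

theorem int_mem (hY : MidconvexIn ⊤ Y) {u v z : ℤ} (hu : u ∈ Y) (hv : v ∈ Y)
    (huv : 2 * z = u + v) : z ∈ Y :=
  hY u hu v hv z (AddSubgroup.mem_top z) (by rwa [nsmul_eq_mul, Nat.cast_ofNat])

theorem odd_sub_of_gap (hY : MidconvexIn ⊤ Y) (ha : a ∈ Y) (hb : b ∈ Y) (hab : a < b)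
    (hgap : ∀ w ∈ Y, w ≤ a ∨ b ≤ w) : Odd (b - a) := by
  rw [← Int.not_even_iff_odd]
  rintro ⟨t, ht⟩
  have hmid : a + t ∈ Y := hY.int_mem ha hb (by omega)
  rcases hgap _ hmid with h | h <;> omega

theorem dvd_sub_of_le_of_gap (hY : MidconvexIn ⊤ Y) (ha : a ∈ Y) (hb : b ∈ Y) (hab : a < b)
    (hgap : ∀ w ∈ Y, w ≤ a ∨ b ≤ w) {v : ℤ} (hv : v ∈ Y) (hva : v ≤ a) :
    b - a ∣ v - a := by
  induction hn : (a - v).toNat using Nat.strong_induction_on generalizing v with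
  | _ n ih =>
  rcases hva.eq_or_lt with rfl | hva
  · simp
  -- one of `a - v`, `b - v` is even since `b - a` is odd; halve the way to that endpoint
  obtain ⟨c, hc, hca, hcb, hdvd, t, ht⟩ :
      ∃ c ∈ Y, a ≤ c ∧ c ≤ b ∧ b - a ∣ c - a ∧ ∃ t, c - v = t + t := by
    rcases Int.even_or_odd (a - v) with ⟨t, ht⟩ | hodd
    · exact ⟨a, ha, le_rfl, hab.le, by simp, t, ht⟩
    · obtain ⟨t, ht⟩ := (odd_sub_of_gap hY ha hb hab hgap).add_odd hodd
      exact ⟨b, hb, hab.le, le_rfl, dvd_rfl, t, by omega⟩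
  have hw : v + t ∈ Y := hY.int_mem hv hc (by omega)
  have hwa : v + t ≤ a := (hgap _ hw).resolve_right (by omega)
  have hdvd_w : b - a ∣ v + t - a := ih _ (by omega) hw hwa rfl
  rw [show v - a = 2 * (v + t - a) - (c - a) by omega]
  exact (hdvd_w.mul_left 2).sub hdvd

theorem dvd_sub_of_gap (hY : MidconvexIn ⊤ Y) (ha : a ∈ Y) (hb : b ∈ Y) (hab : a < b)
    (hgap : ∀ w ∈ Y, w ≤ a ∨ b ≤ w) {v : ℤ} (hv : v ∈ Y) : b - a ∣ v - a := by
  rcases le_or_gt v a with hva | hav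
  · exact dvd_sub_of_le_of_gap hY ha hb hab hgap hv hva
  have hbv : b ≤ v := (hgap v hv).resolve_left hav.not_ge
  -- reflect `Y` through the origin to move `v` below the gap
  have hY' : MidconvexIn ⊤ ((-AddMonoidHom.id ℤ) ⁻¹' Y) := by
    simpa using hY.comap (-AddMonoidHom.id ℤ)
  have hgap' : ∀ w ∈ (-AddMonoidHom.id ℤ) ⁻¹' Y, w ≤ -b ∨ -a ≤ w := fun w hw => by
    have := hgap _ hw
    simp only [AddMonoidHom.neg_apply, AddMonoidHom.id_apply] at this
    omega
  have h := dvd_sub_of_le_of_gap hY' (a := -b) (b := -a) (by simpa) (by simpa) (by omega)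
    hgap' (v := -v) (by simpa) (by omega)
  rw [show v - a = (b - a) - (b - v) by ring]
  exact dvd_sub dvd_rfl (by simpa [neg_add_eq_sub] using h)

end MidconvexIn

theorem Int.mem_or_exists_gap {Y : Set ℤ} {a b g : ℤ} (ha : a ∈ Y) (hb : b ∈ Y)
    (hag : a ≤ g) (hgb : g ≤ b) :
    g ∈ Y ∨ ∃ a' ∈ Y, ∃ b' ∈ Y, a' < g ∧ g < b' ∧ ∀ w ∈ Y, w ≤ a' ∨ b' ≤ w := by
  classical
  obtain ⟨a', ⟨ha', ha'g⟩, ha'max⟩ := Int.exists_greatest_of_bdd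
    (P := fun w => w ∈ Y ∧ w ≤ g) ⟨g, fun _ h => h.2⟩ ⟨a, ha, hag⟩
  obtain ⟨b', ⟨hb', hb'g⟩, hb'min⟩ := Int.exists_least_of_bdd
    (P := fun w => w ∈ Y ∧ g ≤ w) ⟨g, fun _ h => h.2⟩ ⟨b, hb, hgb⟩
  rcases ha'g.eq_or_lt with rfl | ha'g
  · exact Or.inl ha'
  rcases hb'g.eq_or_lt with rfl | hb'g
  · exact Or.inl hb'
  refine Or.inr ⟨a', ha', b', hb', ha'g, hb'g, fun w hw => ?_⟩
  rcases le_total w g with hwg | hgw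
  exacts [Or.inl (ha'max w ⟨hw, hwg⟩), Or.inr (hb'min w ⟨hw, hgw⟩)]

theorem MidconvexIn.int_mem_of_two_pow_mul_mem_closure {Y : Set ℤ} (hY : MidconvexIn ⊤ Y)
    (h0 : 0 ∈ Y) {a b g : ℤ} {k : ℕ} (ha : a ∈ Y) (hb : b ∈ Y) (hag : a ≤ g) (hgb : g ≤ b)
    (hg : 2 ^ k * g ∈ AddSubgroup.closure Y) : g ∈ Y := by
  rcases Int.mem_or_exists_gap ha hb hag hgb with hgY | ⟨a, ha, b, hb, hag, hgb, hgap⟩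
  · exact hgY
  exfalso
  have hab : a < b := hag.trans hgb
  have hdvd : ∀ v ∈ Y, b - a ∣ v := fun v hv => by
    simpa using (hY.dvd_sub_of_gap ha hb hab hgap hv).sub (hY.dvd_sub_of_gap ha hb hab hgap h0)
  have hclosure : AddSubgroup.closure Y ≤ AddSubgroup.zmultiples (b - a) :=
    (AddSubgroup.closure_le _).2 fun v hv => Int.mem_zmultiples_iff.2 (hdvd v hv)
  have hcop : IsCoprime (b - a) (2 ^ k) :=
    (Int.isCoprime_two_right.2 (hY.odd_sub_of_gap ha hb hab hgap)).pow_right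
  have hg : b - a ∣ g - a :=
    (hcop.dvd_of_dvd_mul_left (Int.mem_zmultiples_iff.1 (hclosure hg))).sub (hdvd a ha)
  have := Int.le_of_dvd (by omega) hg
  omega

theorem Rat.exists_nonneg_subset_zmultiples {G : AddSubgroup ℚ} (s : Finset ℚ)
    (hs : ↑s ⊆ (G : Set ℚ)) : ∃ c ∈ G, 0 ≤ c ∧ ↑s ⊆ (AddSubgroup.zmultiples c : Set ℚ) := by
  set N : ℕ := ∏ r ∈ s, r.den
  have hN : 0 < (N : ℚ) := by positivity
  -- all of `s` lies in the discrete group `(1 / N) ℤ`, so `closure s` is cyclic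
  have hsN : AddSubgroup.closure (s : Set ℚ) ≤ AddSubgroup.zmultiples (N : ℚ)⁻¹ := by
    refine (AddSubgroup.closure_le _).2 fun r hr => ?_
    obtain ⟨m, hm⟩ : r.den ∣ N := Finset.dvd_prod_of_mem _ hr
    refine ⟨r.num * m, ?_⟩
    have hr := Rat.mul_den_eq_num r
    simp only [zsmul_eq_mul, ← div_eq_mul_inv]
    rw [div_eq_iff hN.ne', hm]
    push_cast
    linear_combination -(m : ℚ) * hr
  have hdisj : Disjoint (AddSubgroup.closure (s : Set ℚ) : Set ℚ) (Set.Ioo 0 (N : ℚ)⁻¹) := by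
    rw [Set.disjoint_left]
    rintro _ hr ⟨hpos, hlt⟩
    obtain ⟨n, rfl⟩ := hsN hr
    have h0 : 0 < n := (zsmul_lt_zsmul_iff_left (inv_pos.2 hN)).1 (by simpa using hpos)
    have h1 : n < 1 := (zsmul_lt_zsmul_iff_left (inv_pos.2 hN)).1 (by simpa using hlt)
    omega
  obtain ⟨c, hc⟩ := AddSubgroup.cyclic_of_isolated_zero (inv_pos.2 hN) hdisj
  have hcG : c ∈ G :=
    (AddSubgroup.closure_le G).2 hs (hc ▸ AddSubgroup.mem_closure_singleton_self c)
  have hsc : ↑s ⊆ (AddSubgroup.zmultiples c : Set ℚ) := by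
    rw [AddSubgroup.zmultiples_eq_closure, ← hc]
    exact AddSubgroup.subset_closure
  rcases le_total 0 c with hc0 | hc0
  · exact ⟨c, hcG, hc0, hsc⟩
  · exact ⟨-c, neg_mem hcG, neg_nonneg.2 hc0, by rwa [AddSubgroup.zmultiples_neg]⟩

theorem MidconvexIn.mem_of_two_pow_nsmul_mem_closure {G : AddSubgroup ℚ} {X : Set ℚ}
    (hX : MidconvexIn G X) (hXG : X ⊆ G) (h0 : 0 ∈ X) {a b h : ℚ} {k : ℕ} (ha : a ∈ X)
    (hb : b ∈ X) (hh : h ∈ G) (hah : a ≤ h) (hhb : h ≤ b)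
    (hk : 2 ^ k • h ∈ AddSubgroup.closure X) : h ∈ X := by
  classical
  obtain ⟨F, hFX, hkF⟩ := AddSubgroup.exists_finset_of_mem_closure hk
  obtain ⟨c, hcG, hc0, hc⟩ :=
    Rat.exists_nonneg_subset_zmultiples (insert a (insert b (insert h F)))
      (by simpa [Set.insert_subset_iff] using ⟨hXG ha, hXG hb, hh, hFX.trans hXG⟩)
  obtain ⟨na, rfl⟩ : a ∈ AddSubgroup.zmultiples c := hc (by simp)
  obtain ⟨nb, rfl⟩ : b ∈ AddSubgroup.zmultiples c := hc (by simp)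
  obtain ⟨nh, rfl⟩ : h ∈ AddSubgroup.zmultiples c := hc (by simp)
  rcases hc0.eq_or_lt with rfl | hcpos
  · simpa using h0
  set φ := zmultiplesHom ℚ c
  have hY : MidconvexIn ⊤ (φ ⁻¹' X) :=
    (hX.comap φ).mono fun n _ => AddSubgroup.zsmul_mem G hcG n
  have hF : AddSubgroup.closure (F : Set ℚ) ≤ (AddSubgroup.closure (φ ⁻¹' X)).map φ := by
    refine (AddSubgroup.closure_le _).2 fun r hr => ?_
    obtain ⟨n, rfl⟩ : r ∈ AddSubgroup.zmultiples c := hc (by simp [hr])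
    exact AddSubgroup.mem_map_of_mem φ (AddSubgroup.subset_closure (hFX hr))
  have hinj : Function.Injective φ := fun m n hmn => by
    simpa using (zsmul_left_strictMono hcpos).injective hmn
  have hclosure : 2 ^ k * nh ∈ AddSubgroup.closure (φ ⁻¹' X) := by
    have hφ : φ (2 ^ k * nh) = 2 ^ k • nh • c := by
      simp only [φ, zmultiplesHom_apply, zsmul_eq_mul, nsmul_eq_mul]
      push_cast
      ring
    rw [← AddSubgroup.mem_map_iff_mem hinj, hφ]
    exact hF hkF
  exact hY.int_mem_of_two_pow_mul_mem_closure (by simpa [φ] using h0) ha hb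
    ((zsmul_le_zsmul_iff_left hcpos).1 hah) ((zsmul_le_zsmul_iff_left hcpos).1 hhb) hclosure

theorem stmt_9 (G : AddSubgroup ℚ) (X : Set ℚ) (hXG : X ⊆ (G : Set ℚ))
    (hne : X.Nonempty) :
    (∀ u ∈ X, ∀ v ∈ X, ∀ z ∈ G, 2 • z = u + v → z ∈ X) ↔
      ∃ (C : Set ℚ) (x : ℚ) (H : AddSubgroup ℚ),
        OrderConvexQ C ∧ x ∈ X ∧ H ≤ G ∧
        (∀ g ∈ G, 2 • g ∈ H → g ∈ H) ∧
        X = C ∩ ((· + x) '' (H : Set ℚ)) := by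
  constructor
  · intro hX
    obtain ⟨x, hx⟩ := hne
    have hxG : x ∈ G := hXG hx
    set X₀ := (· + x) ⁻¹' X
    have hX₀ : MidconvexIn G X₀ := MidconvexIn.preimage_add_right hX hxG
    have hX₀G : X₀ ⊆ G := fun q hq => by simpa using sub_mem (hXG hq) hxG
    refine ⟨{q | ∃ a ∈ X, ∃ b ∈ X, a ≤ q ∧ q ≤ b}, x, G.twoSaturation (AddSubgroup.closure X₀),
      ?_, hx, fun q hq => hq.1, fun g hg => AddSubgroup.mem_twoSaturation_of_two_nsmul_mem hg, ?_⟩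
    · rintro p ⟨a, ha, -, -, hap, -⟩ q ⟨-, -, b, hb, -, hqb⟩ r hpr hrq
      exact ⟨a, ha, b, hb, hap.trans hpr, hrq.trans hqb⟩
    ext q
    constructor
    · intro hq
      have hqx : q - x ∈ X₀ := by simpa [X₀] using hq
      exact ⟨⟨q, hq, q, hq, le_rfl, le_rfl⟩, q - x,
        ⟨hX₀G hqx, 0, by simpa using AddSubgroup.subset_closure hqx⟩, sub_add_cancel q x⟩
    · rintro ⟨⟨a, ha, b, hb, haq, hqb⟩, h, ⟨hhG, k, hk⟩, rfl⟩
      exact hX₀.mem_of_two_pow_nsmul_mem_closure hX₀G (by simpa [X₀] using hx)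
        (a := a - x) (b := b - x) (by simpa [X₀] using ha) (by simpa [X₀] using hb) hhG
        (by simp only at haq; linarith) (by simp only at hqb; linarith) hk
  · rintro ⟨C, x, H, hC, hx, -, hH, rfl⟩
    exact (MidconvexIn.of_orderConvexQ hC).inter (MidconvexIn.image_add_right hH (hXG hx))
end

section
/- Let X be a midconvex subset of an abelian group G, x ∈ X, and g ∈ G. If the set Z = {n ∈ ℤ : x + n•g ∈ X} contains a nonzero element, then the nonzero element m of Z of smallest absolute value is odd. -/
theorem Midconvex.add_zsmul_mem_of_add_add_self_zsmul_mem {G : Type*} [AddCommGroup G]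
    {X : Set G} (hX : Midconvex X) {x g : G} (hx : x ∈ X) {k : ℤ}
    (h : x + (k + k) • g ∈ X) : x + k • g ∈ X :=
  hX x hx _ h _ (by rw [add_zsmul]; abel)

theorem stmt_12 {G : Type*} [AddCommGroup G] (X : Set G) (hX : Midconvex X)
    (x : G) (hx : x ∈ X) (g : G) (m : ℤ) (hm : m ≠ 0)
    (hmZ : x + m • g ∈ X)
    (hmin : ∀ n : ℤ, n ≠ 0 → x + n • g ∈ X → |m| ≤ |n|) :
    Odd m := by
  by_contra hodd
  obtain ⟨k, rfl⟩ : Even m := Int.not_odd_iff_even.mp hodd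
  have hk : k ≠ 0 := by rintro rfl; simp at hm
  have hle := hmin k hk (hX.add_zsmul_mem_of_add_add_self_zsmul_mem hx hmZ)
  rw [← two_mul, abs_mul, abs_two] at hle
  linarith [abs_pos.mpr hk]
end

section
/- Let X be a midconvex subset of an abelian group G, x ∈ X, and a ∈ G an element of finite order with x + a ∈ X. Then x + n•a ∈ X for all n ∈ ℤ; that is, the entire coset x + ⟨a⟩ is contained in X. -/
namespace Midconvex

variable {G : Type*} [AddCommGroup G] {X : Set G} {x a : G}

theorem add_mem_of_two_pow_nsmul_eq (hX : Midconvex X) (hx : x ∈ X) (ha : x + a ∈ X)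
    {j r : ℕ} (hr : r < 2 ^ j) {h : G} (hh : 2 ^ j • h = r • a) : x + h ∈ X := by
  induction j generalizing r h with
  | zero =>
    obtain rfl : r = 0 := by omega
    rw [pow_zero, one_nsmul, zero_nsmul] at hh
    rwa [hh, add_zero]
  | succ j ih =>
    rw [pow_succ, mul_nsmul'] at hh
    by_cases hrj : r < 2 ^ j
    · have hdouble : x + 2 • h ∈ X := ih hrj hh
      exact hX _ hdouble _ hx _ (by rw [smul_add]; abel)
    · have hshift : x + (2 • h - a) ∈ X :=
        ih (r := r - 2 ^ j) (by rw [pow_succ] at hr; omega)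
          (by rw [smul_sub, hh, sub_nsmul a (not_lt.mp hrj), sub_eq_add_neg])
      exact hX _ hshift _ ha _ (by rw [smul_add]; abel)

theorem add_nsmul_mem (hX : Midconvex X) (hx : x ∈ X) (ha : x + a ∈ X)
    (hfin : IsOfFinAddOrder a) (k : ℕ) : x + k • a ∈ X := by
  set o := addOrderOf a
  refine hX.add_mem_of_two_pow_nsmul_eq hx ha (r := (2 ^ o * k) % o)
    ((Nat.mod_lt _ hfin.addOrderOf_pos).trans o.lt_two_pow_self) ?_
  rw [mod_addOrderOf_nsmul, mul_nsmul']

end Midconvex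

theorem stmt_13 {G : Type*} [AddCommGroup G] (X : Set G) (hX : Midconvex X)
    (x : G) (hx : x ∈ X) (a : G) (hfin : ∃ m : ℕ, 0 < m ∧ m • a = 0)
    (ha : x + a ∈ X) :
    ∀ n : ℤ, x + n • a ∈ X := by
  replace hfin : IsOfFinAddOrder a := isOfFinAddOrder_iff_nsmul_eq_zero.mpr hfin
  intro n
  obtain ⟨k, hk⟩ : n • a ∈ AddSubmonoid.multiples a :=
    hfin.mem_multiples_iff_mem_zmultiples.mpr (AddSubgroup.zsmul_mem_zmultiples a n)
  rw [← hk]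
  exact hX.add_nsmul_mem hx ha hfin k
end
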